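/- For every D ∈ ℕ, d ≤ D, γ ∈ [0,1] and all n⁻, n⁰, n⁺ ∈ ℕ^p: (i) k^D_{d,γ}(n⁻, n⁰, n⁺) = (1−γ)·k^D_{d,0}(n⁻, n⁰, n⁺) + γ·k^D_{d,1}(n⁻, n⁰, n⁺), so that varying γ linearly interpolates between the two extreme truncated functions; and (ii) k^D_{d,0}(n⁻, n⁰, n⁺) ≤ k_d(n⁻, n⁰, n⁺) ≤ k^D_{d,1}(n⁻, n⁰, n⁺), i.e. the truncated functions at γ = 0 and γ = 1 are respectively a lower and an upper bound on the exact sub-correlation function. -/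

import Mathlib

/-- Total weight `W(v) = Σ_{i : v_i ≠ 0} w_i` of the axes with at least one available split. -/
noncomputable def bartW (p : ℕ) (w : Fin p → ℝ) (v : Fin p → ℕ) : ℝ :=
  ∑ i ∈ Finset.univ.filter (fun i => v i ≠ 0), w i

/-- The BART sub-correlation function `k_d(n⁻, n⁰, n⁺)`, defined by well-founded recursion
on `Σ_i (n⁻_i + n⁺_i)`. -/
noncomputable def bartK (p : ℕ) (w : Fin p → ℝ) (P : ℕ → ℝ)
    (d : ℕ) (nm n0 np : Fin p → ℕ) : ℝ :=
  if ∀ i, nm i + n0 i + np i = 0 then 1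
  else
    1 - P d * (1 - (1 / bartW p w (fun i => nm i + n0 i + np i)) *
      ∑ i ∈ Finset.univ.filter (fun i => nm i + n0 i + np i ≠ 0),
        (w i / ((nm i + n0 i + np i : ℕ) : ℝ)) *
          ((∑ k ∈ (Finset.range (nm i)).attach,
              bartK p w P (d+1) (Function.update nm i k.1) n0 np) +
           (∑ k ∈ (Finset.range (np i)).attach,
              bartK p w P (d+1) nm n0 (Function.update np i k.1))))
termination_by ∑ i, (nm i + np i)
decreasing_by
  · have hk : k.1 < nm i := Finset.mem_range.mp k.2
    refine Finset.sum_lt_sum (fun j _ => ?_) ⟨i, Finset.mem_univ i, ?_⟩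
    · rcases eq_or_ne j i with rfl | hj
      · simp only [Function.update_self]; omega
      · simp only [Function.update_of_ne hj]; omega
    · simp only [Function.update_self]; omega
  · have hk : k.1 < np i := Finset.mem_range.mp k.2
    refine Finset.sum_lt_sum (fun j _ => ?_) ⟨i, Finset.mem_univ i, ?_⟩
    · rcases eq_or_ne j i with rfl | hj
      · simp only [Function.update_self]; omega
      · simp only [Function.update_of_ne hj]; omega
    · simp only [Function.update_self]; omega

/-- The truncated BART sub-correlation function `k^D_{d,γ}`: same recursion as `k_d` for
`d < D`, with base cases `1` if `n = 0`, `1` at depth `D` if `n⁰ = 0`, and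
`1 - (1-γ)·P_D` at depth `D` if `n⁰ ≠ 0`. -/
noncomputable def bartKT (p : ℕ) (w : Fin p → ℝ) (P : ℕ → ℝ) (D : ℕ) (γ : ℝ)
    (d : ℕ) (nm n0 np : Fin p → ℕ) : ℝ :=
  if ∀ i, nm i + n0 i + np i = 0 then 1
  else if D ≤ d then
    (if ∀ i, n0 i = 0 then 1 else 1 - (1 - γ) * P D)
  else
    1 - P d * (1 - (1 / bartW p w (fun i => nm i + n0 i + np i)) *
      ∑ i ∈ Finset.univ.filter (fun i => nm i + n0 i + np i ≠ 0),
        (w i / ((nm i + n0 i + np i : ℕ) : ℝ)) *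
          ((∑ k ∈ Finset.range (nm i),
              bartKT p w P D γ (d+1) (Function.update nm i k) n0 np) +
           (∑ k ∈ Finset.range (np i),
              bartKT p w P D γ (d+1) nm n0 (Function.update np i k))))
termination_by D - d
decreasing_by all_goals omega

/-! Both `k_d` and `k^D_{d,γ}` iterate the same step `f ↦ 1 - P_d (1 - W⁻¹ Σ_i (w_i/n_i) Σ f)`,
the inner sum running over the states reached by one split. This step is affine in the values
of `f` and, for `P_d ≥ 0`, monotone in them. Affinity carries the interpolation in `γ` down from
depth `D`, where it is the identity `1 - (1-γ) P_D = (1-γ) (1 - P_D) + γ`. Monotonicity carries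
the bounds down from depth `D`, where they read `1 - P_D ≤ k_D ≤ 1` if `n⁰ ≠ 0`, and `k_D = 1`
if `n⁰ = 0`: splits never create an `n⁰`, and then the weights of the step average to one. -/

open Finset Function

theorem Finset.sum_update_lt {ι : Type*} [Fintype ι] [DecidableEq ι] (v : ι → ℕ) {i : ι}
    {k : ℕ} (hk : k < v i) : ∑ j, update v i k j < ∑ j, v j := by
  refine sum_lt_sum (fun j _ => ?_) ⟨i, mem_univ i, by simpa using hk⟩
  rcases eq_or_ne j i with rfl | hj
  · simpa using hk.le
  · simp [hj]

section Splits

variable {p : ℕ}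

def ForallSplits (nm np : Fin p → ℕ) (R : (Fin p → ℕ) → (Fin p → ℕ) → Prop) : Prop :=
  (∀ i, ∀ k < nm i, R (update nm i k) np) ∧ ∀ i, ∀ k < np i, R nm (update np i k)

theorem ForallSplits.mono {nm np : Fin p → ℕ} {R S : (Fin p → ℕ) → (Fin p → ℕ) → Prop}
    (h : ForallSplits nm np R) (hRS : ∀ a b, R a b → S a b) : ForallSplits nm np S :=
  ⟨fun i k hk => hRS _ _ (h.1 i k hk), fun i k hk => hRS _ _ (h.2 i k hk)⟩

theorem forallSplits_induction {Q : ℕ → (Fin p → ℕ) → (Fin p → ℕ) → Prop}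
    (h : ∀ d nm np, ForallSplits nm np (Q (d + 1)) → Q d nm np) (d : ℕ) (nm np : Fin p → ℕ) :
    Q d nm np :=
  h d nm np ⟨fun i k _ => forallSplits_induction h (d + 1) (update nm i k) np,
    fun i k _ => forallSplits_induction h (d + 1) nm (update np i k)⟩
termination_by ∑ i, (nm i + np i)
decreasing_by
  all_goals simp only [sum_add_distrib]
  · linarith [sum_update_lt nm ‹_›]
  · linarith [sum_update_lt np ‹_›]

end Splits

section Step

variable {p : ℕ} {w : Fin p → ℝ} {nm n0 np : Fin p → ℕ}

theorem bartW_nonneg (hw : ∀ i, 0 ≤ w i) (v : Fin p → ℕ) : 0 ≤ bartW p w v :=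
  sum_nonneg fun i _ => hw i

theorem bartW_pos (hw : ∀ i, 0 < w i) {v : Fin p → ℕ} (hv : ¬ ∀ i, v i = 0) :
    0 < bartW p w v := by
  obtain ⟨i, hi⟩ := not_forall.mp hv
  exact sum_pos (fun j _ => hw j) ⟨i, mem_filter.mpr ⟨mem_univ i, hi⟩⟩

variable (w nm n0 np) in
noncomputable def splitSum (f : (Fin p → ℕ) → (Fin p → ℕ) → ℝ) : ℝ :=
  ∑ i ∈ univ.filter (fun i => nm i + n0 i + np i ≠ 0),
    (w i / ((nm i + n0 i + np i : ℕ) : ℝ)) *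
      ((∑ k ∈ range (nm i), f (update nm i k) np) + ∑ k ∈ range (np i), f nm (update np i k))

variable (w nm n0 np) in
noncomputable def splitStep (Pd : ℝ) (f : (Fin p → ℕ) → (Fin p → ℕ) → ℝ) : ℝ :=
  1 - Pd * (1 - (1 / bartW p w (fun i => nm i + n0 i + np i)) * splitSum w nm n0 np f)

theorem splitSum_mono (hw : ∀ i, 0 ≤ w i) {f g : (Fin p → ℕ) → (Fin p → ℕ) → ℝ}
    (hfg : ForallSplits nm np fun a b => f a b ≤ g a b) :
    splitSum w nm n0 np f ≤ splitSum w nm n0 np g :=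
  sum_le_sum fun i _ => mul_le_mul_of_nonneg_left
    (add_le_add (sum_le_sum fun k hk => hfg.1 i k (mem_range.mp hk))
      (sum_le_sum fun k hk => hfg.2 i k (mem_range.mp hk)))
    (div_nonneg (hw i) (Nat.cast_nonneg _))

theorem splitSum_affine (γ : ℝ) {f g h : (Fin p → ℕ) → (Fin p → ℕ) → ℝ}
    (hh : ForallSplits nm np fun a b => h a b = (1 - γ) * f a b + γ * g a b) :
    splitSum w nm n0 np h = (1 - γ) * splitSum w nm n0 np f + γ * splitSum w nm n0 np g := by
  simp only [splitSum, mul_sum, ← sum_add_distrib]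
  refine sum_congr rfl fun i _ => ?_
  rw [sum_congr rfl fun k hk => hh.1 i k (mem_range.mp hk),
    sum_congr rfl fun k hk => hh.2 i k (mem_range.mp hk)]
  simp only [sum_add_distrib, ← mul_sum]
  ring

theorem splitSum_one_le (hw : ∀ i, 0 ≤ w i) :
    splitSum w nm n0 np (fun _ _ => 1) ≤ bartW p w (fun i => nm i + n0 i + np i) := by
  refine sum_le_sum fun i hi => ?_
  have hn : (0 : ℝ) < ((nm i + n0 i + np i : ℕ) : ℝ) := by
    have := (mem_filter.mp hi).2
    positivity
  simp only [sum_const, card_range, nsmul_eq_mul, mul_one]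
  rw [div_mul_eq_mul_div, div_le_iff₀ hn]
  push_cast
  nlinarith [hw i, (n0 i).cast_nonneg (α := ℝ)]

theorem splitSum_one_of_n0 (h0 : ∀ i, n0 i = 0) :
    splitSum w nm n0 np (fun _ _ => 1) = bartW p w (fun i => nm i + n0 i + np i) := by
  refine sum_congr rfl fun i hi => ?_
  have hn : ((nm i + n0 i + np i : ℕ) : ℝ) ≠ 0 := Nat.cast_ne_zero.mpr (mem_filter.mp hi).2
  simp only [sum_const, card_range, nsmul_eq_mul, mul_one]
  rw [div_mul_eq_mul_div, div_eq_iff hn, h0 i]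
  push_cast
  ring

theorem splitStep_mono (hw : ∀ i, 0 ≤ w i) {Pd : ℝ} (hPd : 0 ≤ Pd)
    {f g : (Fin p → ℕ) → (Fin p → ℕ) → ℝ} (hfg : ForallSplits nm np fun a b => f a b ≤ g a b) :
    splitStep w nm n0 np Pd f ≤ splitStep w nm n0 np Pd g := by
  have hc := one_div_nonneg.mpr (bartW_nonneg hw (fun i => nm i + n0 i + np i))
  have := mul_le_mul_of_nonneg_left (splitSum_mono (n0 := n0) hw hfg) hc
  unfold splitStep
  nlinarith

theorem splitStep_affine (Pd γ : ℝ) {f g h : (Fin p → ℕ) → (Fin p → ℕ) → ℝ}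
    (hh : ForallSplits nm np fun a b => h a b = (1 - γ) * f a b + γ * g a b) :
    splitStep w nm n0 np Pd h =
      (1 - γ) * splitStep w nm n0 np Pd f + γ * splitStep w nm n0 np Pd g := by
  simp only [splitStep, splitSum_affine γ hh]
  ring

theorem splitStep_mem_Icc (hw : ∀ i, 0 ≤ w i) {Pd : ℝ} (hPd : 0 ≤ Pd)
    {f : (Fin p → ℕ) → (Fin p → ℕ) → ℝ} (hf : ForallSplits nm np fun a b => f a b ∈ Set.Icc 0 1) :
    splitStep w nm n0 np Pd f ∈ Set.Icc (1 - Pd) 1 := by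
  set W := bartW p w (fun i => nm i + n0 i + np i)
  have hS0 : 0 ≤ splitSum w nm n0 np f := by
    simpa [splitSum] using splitSum_mono (n0 := n0) hw (hf.mono fun _ _ h => h.1)
  have hSW : splitSum w nm n0 np f ≤ W :=
    (splitSum_mono hw (hf.mono fun _ _ h => h.2)).trans (splitSum_one_le hw)
  have hcS : 0 ≤ 1 / W * splitSum w nm n0 np f ∧ 1 / W * splitSum w nm n0 np f ≤ 1 := by
    rcases (bartW_nonneg hw (fun i => nm i + n0 i + np i)).eq_or_lt with hW | hW
    · simp [W, ← hW] -- `1 / 0 = 0`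
    · exact ⟨by positivity, by rw [one_div_mul_eq_div, div_le_one hW]; exact hSW⟩
  constructor <;> unfold splitStep <;> nlinarith [hcS.1, hcS.2]

theorem splitStep_eq_one_of_n0 (hw : ∀ i, 0 < w i) (h0 : ∀ i, n0 i = 0)
    (hn : ¬ ∀ i, nm i + n0 i + np i = 0) (Pd : ℝ) {f : (Fin p → ℕ) → (Fin p → ℕ) → ℝ}
    (hf : ForallSplits nm np fun a b => f a b = 1) : splitStep w nm n0 np Pd f = 1 := by
  have hw' : ∀ i, 0 ≤ w i := fun i => (hw i).le
  have hS : splitSum w nm n0 np f = bartW p w (fun i => nm i + n0 i + np i) := by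
    rw [← splitSum_one_of_n0 h0]
    exact le_antisymm (splitSum_mono hw' (hf.mono fun _ _ h => h.le))
      (splitSum_mono hw' (hf.mono fun _ _ h => h.ge))
  rw [splitStep, hS, one_div_mul_cancel (bartW_pos hw hn).ne']
  ring

end Step

section Unfold

variable {p : ℕ} {w : Fin p → ℝ} {P : ℕ → ℝ} {D : ℕ} {γ : ℝ} {d : ℕ} {nm n0 np : Fin p → ℕ}

theorem bartK_of_eq_zero (hn : ∀ i, nm i + n0 i + np i = 0) : bartK p w P d nm n0 np = 1 := by
  rw [bartK, if_pos hn]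

theorem bartK_of_ne_zero (hn : ¬ ∀ i, nm i + n0 i + np i = 0) :
    bartK p w P d nm n0 np =
      splitStep w nm n0 np (P d) fun a b => bartK p w P (d + 1) a n0 b := by
  rw [bartK, if_neg hn]
  simp only [splitStep, splitSum]
  congr! 5 with i
  rw [sum_attach (range (nm i)) fun k => bartK p w P (d + 1) (update nm i k) n0 np,
    sum_attach (range (np i)) fun k => bartK p w P (d + 1) nm n0 (update np i k)]

theorem bartKT_of_eq_zero (hn : ∀ i, nm i + n0 i + np i = 0) :
    bartKT p w P D γ d nm n0 np = 1 := by
  rw [bartKT, if_pos hn]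

theorem bartKT_of_le (hn : ¬ ∀ i, nm i + n0 i + np i = 0) (hd : D ≤ d) :
    bartKT p w P D γ d nm n0 np = if ∀ i, n0 i = 0 then 1 else 1 - (1 - γ) * P D := by
  rw [bartKT, if_neg hn, if_pos hd]

theorem bartKT_of_lt (hn : ¬ ∀ i, nm i + n0 i + np i = 0) (hd : d < D) :
    bartKT p w P D γ d nm n0 np =
      splitStep w nm n0 np (P d) fun a b => bartKT p w P D γ (d + 1) a n0 b := by
  rw [bartKT, if_neg hn, if_neg hd.not_ge]
  rfl

end Unfold

section Bounds

variable {p : ℕ} {w : Fin p → ℝ} {P : ℕ → ℝ}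

theorem bartK_mem_Icc (hw : ∀ i, 0 ≤ w i) (hP : ∀ d, P d ∈ Set.Icc (0 : ℝ) 1)
    (d : ℕ) (nm n0 np : Fin p → ℕ) : bartK p w P d nm n0 np ∈ Set.Icc (1 - P d) 1 := by
  induction d, nm, np using forallSplits_induction with
  | h d nm np ih =>
    by_cases hn : ∀ i, nm i + n0 i + np i = 0
    · rw [bartK_of_eq_zero hn]
      exact ⟨by linarith [(hP d).1], le_rfl⟩
    · rw [bartK_of_ne_zero hn]
      refine splitStep_mem_Icc hw (hP d).1 (ih.mono fun _ _ h => ⟨?_, h.2⟩)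
      linarith [h.1, (hP (d + 1)).2]

theorem bartK_eq_one_of_n0 (hw : ∀ i, 0 < w i) (d : ℕ) (nm n0 np : Fin p → ℕ)
    (h0 : ∀ i, n0 i = 0) : bartK p w P d nm n0 np = 1 := by
  induction d, nm, np using forallSplits_induction with
  | h d nm np ih =>
    by_cases hn : ∀ i, nm i + n0 i + np i = 0
    · exact bartK_of_eq_zero hn
    · rw [bartK_of_ne_zero hn]
      exact splitStep_eq_one_of_n0 hw h0 hn _ ih

theorem bartKT_eq_affine (D : ℕ) (γ : ℝ) (d : ℕ) (nm n0 np : Fin p → ℕ) :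
    bartKT p w P D γ d nm n0 np =
      (1 - γ) * bartKT p w P D 0 d nm n0 np + γ * bartKT p w P D 1 d nm n0 np := by
  induction d, nm, np using forallSplits_induction with
  | h d nm np ih =>
    by_cases hn : ∀ i, nm i + n0 i + np i = 0
    · simp only [bartKT_of_eq_zero hn]
      ring
    rcases le_or_gt D d with hd | hd
    · simp only [bartKT_of_le hn hd]
      split_ifs <;> ring
    · simp only [bartKT_of_lt hn hd]
      exact splitStep_affine _ γ ih

theorem bartKT_zero_le_bartK (hw : ∀ i, 0 < w i) (hP : ∀ d, P d ∈ Set.Icc (0 : ℝ) 1)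
    {D d : ℕ} (hd : d ≤ D) (nm n0 np : Fin p → ℕ) :
    bartKT p w P D 0 d nm n0 np ≤ bartK p w P d nm n0 np := by
  induction d, nm, np using forallSplits_induction with
  | h d nm np ih =>
    by_cases hn : ∀ i, nm i + n0 i + np i = 0
    · rw [bartKT_of_eq_zero hn, bartK_of_eq_zero hn]
    rcases hd.lt_or_eq with hd | rfl
    · rw [bartKT_of_lt hn hd, bartK_of_ne_zero hn]
      exact splitStep_mono (fun i => (hw i).le) (hP d).1 (ih.mono fun _ _ h => h hd)
    · rw [bartKT_of_le hn le_rfl]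
      split_ifs with h0
      · exact (bartK_eq_one_of_n0 hw _ _ _ _ h0).ge
      · simpa using (bartK_mem_Icc (fun i => (hw i).le) hP _ nm n0 np).1

theorem bartK_le_bartKT_one (hw : ∀ i, 0 ≤ w i) (hP : ∀ d, P d ∈ Set.Icc (0 : ℝ) 1)
    (D d : ℕ) (nm n0 np : Fin p → ℕ) :
    bartK p w P d nm n0 np ≤ bartKT p w P D 1 d nm n0 np := by
  induction d, nm, np using forallSplits_induction with
  | h d nm np ih =>
    by_cases hn : ∀ i, nm i + n0 i + np i = 0
    · rw [bartKT_of_eq_zero hn, bartK_of_eq_zero hn]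
    rcases lt_or_ge d D with hd | hd
    · rw [bartKT_of_lt hn hd, bartK_of_ne_zero hn]
      exact splitStep_mono hw (hP d).1 ih
    · rw [bartKT_of_le hn hd, sub_self, zero_mul, sub_zero, ite_self]
      exact (bartK_mem_Icc hw hP d nm n0 np).2

end Bounds

theorem bartKT_interpolates_and_bounds_general
    (p : ℕ) (w : Fin p → ℝ) (hw : ∀ i, 0 < w i)
    (P : ℕ → ℝ) (hP : ∀ d, P d ∈ Set.Icc (0 : ℝ) 1)
    (D d : ℕ) (hd : d ≤ D) (γ : ℝ)
    (nm n0 np : Fin p → ℕ) :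
    bartKT p w P D γ d nm n0 np =
        (1 - γ) * bartKT p w P D 0 d nm n0 np + γ * bartKT p w P D 1 d nm n0 np ∧
    bartKT p w P D 0 d nm n0 np ≤ bartK p w P d nm n0 np ∧
    bartK p w P d nm n0 np ≤ bartKT p w P D 1 d nm n0 np :=
  ⟨bartKT_eq_affine D γ d nm n0 np, bartKT_zero_le_bartK hw hP hd nm n0 np,
    bartK_le_bartKT_one (fun i => (hw i).le) hP D d nm n0 np⟩

/-- Theorem 3: for `d ≤ D` and `γ ∈ [0,1]`, the truncated sub-correlation `k^D_{d,γ}`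
linearly interpolates in `γ` between `k^D_{d,0}` and `k^D_{d,1}`, which are respectively
a lower and an upper bound on the exact sub-correlation `k_d`. -/
theorem bartKT_interpolates_and_bounds
    (p : ℕ) (hp : 1 ≤ p) (w : Fin p → ℝ) (hw : ∀ i, 0 < w i)
    (P : ℕ → ℝ) (hP : ∀ d, P d ∈ Set.Icc (0 : ℝ) 1)
    (D d : ℕ) (hd : d ≤ D) (γ : ℝ) (hγ : γ ∈ Set.Icc (0 : ℝ) 1)
    (nm n0 np : Fin p → ℕ) :
    bartKT p w P D γ d nm n0 np =
        (1 - γ) * bartKT p w P D 0 d nm n0 np + γ * bartKT p w P D 1 d nm n0 np ∧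
    bartKT p w P D 0 d nm n0 np ≤ bartK p w P d nm n0 np ∧
    bartK p w P d nm n0 np ≤ bartKT p w P D 1 d nm n0 np :=
  bartKT_interpolates_and_bounds_general p w hw P hP D d hd γ nm n0 np
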